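/- Suppose the density f additionally has finite mean, ∫_0^∞ x·f(x) dx < ∞. Then ∑_{n=1}^∞ Q_δ(n) tends to +∞ as δ → 0⁺. -/
import Mathlib


open scoped BigOperators
open Filter Set MeasureTheory

/-- `Q f δ n = ℙ(τ ≥ n)` for the 1-d senile reinforced random walk stochastically
perturbed by `δ·ξ_n`, with `ξ_n` i.i.d. with density `f` on `[0,∞)`:
`Q_δ(n) = ∏_{i=1}^{n-1} ∫_0^{(i+1)/(δ(i+2))} ((i+1)/(i+2) - δx) f(x) dx`
(`Q f δ 1 = 1` since the product is empty). -/
noncomputable def Q (f : ℝ → ℝ) (δ : ℝ) (n : ℕ) : ℝ :=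
  ∏ i ∈ Finset.Icc 1 (n - 1),
    ∫ x in Set.Ioc (0 : ℝ) (((i : ℝ) + 1) / (δ * ((i : ℝ) + 2))),
      (((i : ℝ) + 1) / ((i : ℝ) + 2) - δ * x) * f x

private lemma prodA (n : ℕ) :
    ∏ i ∈ Finset.Icc 1 n, (((i:ℝ)+1)/((i:ℝ)+2)) = 2/((n:ℝ)+2) := by
  induction n with
  | zero => norm_num
  | succ n ih =>
    rw [Finset.prod_Icc_succ_top (Nat.le_add_left 1 n), ih]
    have h1 : ((n:ℝ)+2) ≠ 0 := by positivity
    push_cast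
    field_simp
    ring

private lemma harmonic_unbounded (C : ℝ) :
    ∃ N : ℕ, 1 ≤ N ∧ C ≤ ∑ n ∈ Finset.range N, 1/((n:ℝ)+2) := by
  have h : Tendsto (fun N : ℕ => ∑ n ∈ Finset.range N, 1/((n:ℝ)+2)) atTop atTop := by
    have h2 : ∀ N : ℕ, ∑ n ∈ Finset.range N, 1/((n:ℝ)+2)
        = (∑ i ∈ Finset.range (N+1), (1/((i:ℝ)+1))) - 1 := by
      intro N
      rw [Finset.sum_range_succ' (fun i => 1/((i:ℝ)+1))]
      push_cast
      have : ∀ i : ℕ, 1/((i:ℝ)+1+1) = 1/((i:ℝ)+2) := by intro i; ring_nf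
      simp only [this]
      ring
    simp only [h2]
    exact (Real.tendsto_sum_range_one_div_nat_succ_atTop.comp (tendsto_add_atTop_nat 1)).atTop_add
      tendsto_const_nhds
  rcases ((h.eventually_ge_atTop C).and (eventually_ge_atTop 1)).exists with ⟨N, h1, h2⟩
  exact ⟨N, h2, h1⟩

private lemma mono_Ioc {g : ℝ → ℝ} (hg : ∀ x ∈ Set.Ioi (0:ℝ), 0 ≤ g x)
    (hint : IntegrableOn g (Set.Ioi 0)) {T M : ℝ} (h : T ≤ M) :
    ∫ x in Set.Ioc 0 T, g x ≤ ∫ x in Set.Ioc 0 M, g x := by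
  refine setIntegral_mono_set (hint.mono_set Set.Ioc_subset_Ioi_self) ?_
    ((Set.Ioc_subset_Ioc_right h).eventuallyLE)
  exact ae_restrict_of_forall_mem measurableSet_Ioc fun x hx => hg x hx.1

private lemma le_Ioi {g : ℝ → ℝ} (hg : ∀ x ∈ Set.Ioi (0:ℝ), 0 ≤ g x)
    (hint : IntegrableOn g (Set.Ioi 0)) (M : ℝ) :
    ∫ x in Set.Ioc 0 M, g x ≤ ∫ x in Set.Ioi 0, g x := by
  refine setIntegral_mono_set hint ?_ (Set.Ioc_subset_Ioi_self.eventuallyLE)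
  exact ae_restrict_of_forall_mem measurableSet_Ioi hg

private lemma factor_split (f : ℝ → ℝ)
    (hf_int : IntegrableOn f (Set.Ioi 0))
    (hxf_int : IntegrableOn (fun x => x * f x) (Set.Ioi 0))
    (a δ : ℝ) (M : ℝ) :
    ∫ x in Set.Ioc (0:ℝ) M, (a - δ * x) * f x
      = a * (∫ x in Set.Ioc (0:ℝ) M, f x)
        - δ * ∫ x in Set.Ioc (0:ℝ) M, x * f x := by
  have h1 : IntegrableOn (fun x => a * f x) (Set.Ioc (0:ℝ) M) :=
    ((hf_int.mono_set Set.Ioc_subset_Ioi_self).const_mul a)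
  have h2 : IntegrableOn (fun x => δ * (x * f x)) (Set.Ioc (0:ℝ) M) :=
    ((hxf_int.mono_set Set.Ioc_subset_Ioi_self).const_mul δ)
  have : ∀ x : ℝ, (a - δ * x) * f x = a * f x - δ * (x * f x) := fun x => by ring
  simp only [this]
  rw [integral_sub h1 h2, MeasureTheory.integral_const_mul, MeasureTheory.integral_const_mul]


set_option maxHeartbeats 2000000 in
/-- if the density `f` has finite mean, then
`𝔼[τ] = ∑_{n=1}^∞ Q_δ(n) → +∞` as `δ → 0⁺`. -/
theorem expectation_tau_tendsto_atTop_finite_mean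
    (f : ℝ → ℝ) (hmeas : Measurable f) (hnonneg : ∀ x, 0 ≤ f x)
    (hdensity : ∫ x in Set.Ioi (0 : ℝ), f x = 1)
    (hmean : IntegrableOn (fun x => x * f x) (Set.Ioi (0 : ℝ))) :
    Tendsto (fun δ : ℝ => ∑' n : ℕ, Q f δ (n + 1)) (nhdsWithin 0 (Set.Ioi 0)) atTop := by
  have hf_int : IntegrableOn f (Set.Ioi 0) := by
    by_contra h
    rw [MeasureTheory.integral_undef h] at hdensity
    norm_num at hdensity
  have hfnn : ∀ x ∈ Set.Ioi (0:ℝ), 0 ≤ f x := fun x _ => hnonneg x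
  have hxfnn : ∀ x ∈ Set.Ioi (0:ℝ), 0 ≤ x * f x := fun x hx =>
    mul_nonneg (le_of_lt hx) (hnonneg x)
  set m := ∫ x in Set.Ioi (0:ℝ), x * f x with hm_def
  have hm0 : 0 ≤ m := setIntegral_nonneg measurableSet_Ioi hxfnn
  -- truncated integral of f tends to 1
  have htrunc : Tendsto (fun T : ℝ => ∫ x in Set.Ioc 0 T, f x) atTop (nhds 1) := by
    have h1 := MeasureTheory.intervalIntegral_tendsto_integral_Ioi 0 hf_int
      (tendsto_id (α := ℝ) (x := atTop))
    rw [hdensity] at h1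
    refine h1.congr' ?_
    filter_upwards [eventually_ge_atTop (0:ℝ)] with T hT
    simp only [id]
    rw [intervalIntegral.integral_of_le hT]
  -- pick T1 with mass ≥ 1/2, get c0 > 0
  obtain ⟨T1, hT1half, hT1ge⟩ :=
    ((htrunc.eventually (eventually_ge_nhds (show (1:ℝ)/2 < 1 by norm_num))).and
      (eventually_ge_atTop (1:ℝ))).exists
  set c0 := ∫ x in Set.Ioc (0:ℝ) T1, x * f x with hc0_def
  have hc0nn : 0 ≤ c0 := setIntegral_nonneg measurableSet_Ioc
    (fun x hx => mul_nonneg hx.1.le (hnonneg x))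
  have hc0pos : 0 < c0 := by
    rcases hc0nn.lt_or_eq with h | h
    · exact h
    · exfalso
      have hint : Integrable (fun x => x * f x) (volume.restrict (Set.Ioc (0:ℝ) T1)) :=
        hmean.mono_set Set.Ioc_subset_Ioi_self
      have hnn : 0 ≤ᵐ[volume.restrict (Set.Ioc (0:ℝ) T1)] (fun x => x * f x) :=
        ae_restrict_of_forall_mem measurableSet_Ioc
          (fun x hx => mul_nonneg hx.1.le (hnonneg x))
      have hzero : (fun x => x * f x) =ᵐ[volume.restrict (Set.Ioc (0:ℝ) T1)] 0 :=
        (integral_eq_zero_iff_of_nonneg_ae hnn hint).1 h.symm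
      have hf0 : ∫ x in Set.Ioc (0:ℝ) T1, f x = 0 := by
        have hfz : f =ᵐ[volume.restrict (Set.Ioc (0:ℝ) T1)] 0 := by
          have hmem : ∀ᵐ x ∂(volume.restrict (Set.Ioc (0:ℝ) T1)), x ∈ Set.Ioc (0:ℝ) T1 :=
            ae_restrict_of_forall_mem measurableSet_Ioc (fun x hx => hx)
          filter_upwards [hzero, hmem] with x hx hxm
          have hxpos : (0:ℝ) < x := hxm.1
          simpa using (mul_eq_zero.1 hx).resolve_left (ne_of_gt hxpos)
        rw [integral_congr_ae hfz]
        simp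
      rw [hf0] at hT1half
      norm_num at hT1half
  -- main argument
  rw [tendsto_atTop]
  intro C
  obtain ⟨N, hN1, hNC⟩ := harmonic_unbounded C
  have hNpos : (0:ℝ) < N := by exact_mod_cast hN1
  have hN1' : (1:ℝ) ≤ N := by exact_mod_cast hN1
  set ε : ℝ := 1/(6*N) with hε_def
  have hεpos : 0 < ε := by positivity
  have hε3 : 3*ε ≤ 1/2 := by
    rw [hε_def, mul_one_div, div_le_div_iff₀ (by positivity) (by norm_num)]
    linarith
  -- pick T for the ε-tail bound
  obtain ⟨T, hTε, hTge1⟩ :=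
    ((htrunc.eventually (eventually_ge_nhds (show (1:ℝ) - ε < 1 by linarith))).and
      (eventually_ge_atTop (1:ℝ))).exists
  have hTpos : (0:ℝ) < T := lt_of_lt_of_le one_pos hTge1
  have hT1pos : (0:ℝ) < T1 := lt_of_lt_of_le one_pos hT1ge
  set δ0 := min (ε/(m+1)) (min (2/(3*T)) (2/(3*T1))) with hδ0_def
  have hδ0pos : 0 < δ0 :=
    lt_min (div_pos hεpos (by linarith)) (lt_min (by positivity) (by positivity))
  filter_upwards [Ioo_mem_nhdsGT_of_mem
    (show (0:ℝ) ∈ Set.Ico 0 δ0 from ⟨le_refl _, hδ0pos⟩)] with δ hδmem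
  obtain ⟨hδpos, hδlt⟩ := hδmem
  have hδε : δ * m ≤ ε := by
    have h1 : δ ≤ ε/(m+1) := le_of_lt (lt_of_lt_of_le hδlt (min_le_left _ _))
    have h2 : δ * m ≤ δ * (m+1) := by nlinarith
    have h3 : δ * (m+1) ≤ (ε/(m+1)) * (m+1) := by nlinarith
    have h4 : (ε/(m+1)) * (m+1) = ε := div_mul_cancel₀ ε (by linarith)
    linarith
  have hδT : δ < 2/(3*T) := lt_of_lt_of_le hδlt ((min_le_right _ _).trans (min_le_left _ _))
  have hδT1 : δ < 2/(3*T1) := lt_of_lt_of_le hδlt ((min_le_right _ _).trans (min_le_right _ _))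
  -- the factors
  set F : ℕ → ℝ := fun i =>
    ∫ x in Set.Ioc (0 : ℝ) (((i : ℝ) + 1) / (δ * ((i : ℝ) + 2))),
      (((i : ℝ) + 1) / ((i : ℝ) + 2) - δ * x) * f x with hF_def
  have hQeq : ∀ n : ℕ, Q f δ (n+1) = ∏ i ∈ Finset.Icc 1 n, F i := by
    intro n
    rw [Q, Nat.add_sub_cancel]
  -- per-factor bounds
  have key : ∀ i : ℕ, 1 ≤ i →
      0 ≤ F i ∧ F i ≤ 1 - δ*c0 ∧ ((i:ℝ)+1)/((i:ℝ)+2) * (1 - 3*ε) ≤ F i := by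
    intro i hi
    have hi1 : (1:ℝ) ≤ (i:ℝ) := by exact_mod_cast hi
    set A : ℝ := ((i:ℝ)+1)/((i:ℝ)+2) with hA_def
    set M : ℝ := ((i:ℝ)+1)/(δ*((i:ℝ)+2)) with hM_def
    have hi2pos : (0:ℝ) < (i:ℝ)+2 := by linarith
    have hApos : 0 < A := by positivity
    have hA23 : 2/3 ≤ A := by
      rw [hA_def, div_le_div_iff₀ (by norm_num) hi2pos]
      linarith
    have hA1 : A ≤ 1 := by
      rw [hA_def, div_le_one hi2pos]; linarith
    have hMeq : M = A / δ := by
      rw [hM_def, hA_def, div_div, mul_comm]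
    have hM23 : 2/(3*δ) ≤ M := by
      rw [hMeq, ← div_div]
      exact div_le_div_of_nonneg_right hA23 hδpos.le
    have hTM : T ≤ M := by
      have h1 : T < 2/(3*δ) := by
        rw [lt_div_iff₀ (by positivity)] at hδT ⊢
        nlinarith
      linarith
    have hT1M : T1 ≤ M := by
      have h1 : T1 < 2/(3*δ) := by
        rw [lt_div_iff₀ (by positivity)] at hδT1 ⊢
        nlinarith
      linarith
    have hFnn : 0 ≤ F i := by
      rw [hF_def]
      refine setIntegral_nonneg measurableSet_Ioc (fun x hx => mul_nonneg ?_ (hnonneg x))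
      have hxM : x ≤ M := hx.2
      have : δ * x ≤ δ * M := by nlinarith
      rw [hMeq, mul_div_cancel₀ _ (ne_of_gt hδpos)] at this
      rw [← hA_def]
      linarith
    have hsplit : F i = A * (∫ x in Set.Ioc (0:ℝ) M, f x)
        - δ * ∫ x in Set.Ioc (0:ℝ) M, x * f x := by
      simp only [hF_def, ← hM_def, ← hA_def]
      exact factor_split f hf_int hmean A δ M
    have hIf_le1 : ∫ x in Set.Ioc (0:ℝ) M, f x ≤ 1 := by
      rw [← hdensity]; exact le_Ioi hfnn hf_int M
    have hIf_nn : 0 ≤ ∫ x in Set.Ioc (0:ℝ) M, f x :=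
      setIntegral_nonneg measurableSet_Ioc (fun x hx => hnonneg x)
    have hIf_ge : 1 - ε ≤ ∫ x in Set.Ioc (0:ℝ) M, f x :=
      le_trans hTε (mono_Ioc hfnn hf_int hTM)
    have hIxf_le : ∫ x in Set.Ioc (0:ℝ) M, x * f x ≤ m := le_Ioi hxfnn hmean M
    have hIxf_ge : c0 ≤ ∫ x in Set.Ioc (0:ℝ) M, x * f x := mono_Ioc hxfnn hmean hT1M
    refine ⟨hFnn, ?_, ?_⟩
    · rw [hsplit]
      have h1 : A * (∫ x in Set.Ioc (0:ℝ) M, f x) ≤ 1 := by nlinarith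
      have h2 : δ * c0 ≤ δ * ∫ x in Set.Ioc (0:ℝ) M, x * f x := by nlinarith
      linarith
    · rw [hsplit]
      have h1 : A * (1 - ε) ≤ A * (∫ x in Set.Ioc (0:ℝ) M, f x) := by nlinarith
      have h2 : δ * ∫ x in Set.Ioc (0:ℝ) M, x * f x ≤ ε := by nlinarith
      nlinarith
  -- summability via geometric bound
  set r := 1 - δ*c0 with hr_def
  have hr0 : 0 ≤ r := le_trans (key 1 le_rfl).1 (key 1 le_rfl).2.1
  have hr1 : r < 1 := by
    rw [hr_def]
    nlinarith
  have hQnn : ∀ n : ℕ, 0 ≤ Q f δ (n+1) := by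
    intro n
    rw [hQeq n]
    exact Finset.prod_nonneg fun i hi => (key i (Finset.mem_Icc.1 hi).1).1
  have hQle : ∀ n : ℕ, Q f δ (n+1) ≤ r^n := by
    intro n
    rw [hQeq n]
    calc ∏ i ∈ Finset.Icc 1 n, F i ≤ ∏ _i ∈ Finset.Icc 1 n, r :=
        Finset.prod_le_prod (fun i hi => (key i (Finset.mem_Icc.1 hi).1).1)
          (fun i hi => (key i (Finset.mem_Icc.1 hi).1).2.1)
      _ = r ^ n := by rw [Finset.prod_const, Nat.card_Icc, Nat.add_sub_cancel]
  have hsum : Summable (fun n : ℕ => Q f δ (n+1)) :=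
    Summable.of_nonneg_of_le hQnn hQle (summable_geometric_of_lt_one hr0 hr1)
  have hpartial : ∑ n ∈ Finset.range N, Q f δ (n+1) ≤ ∑' n : ℕ, Q f δ (n+1) :=
    Summable.sum_le_tsum (Finset.range N) (fun i _ => hQnn i) hsum
  have hlow : ∀ n ∈ Finset.range N, 1/((n:ℝ)+2) ≤ Q f δ (n+1) := by
    intro n hn
    have hnN : n ≤ N := le_of_lt (Finset.mem_range.1 hn)
    have hnN' : ((n:ℝ)) ≤ (N:ℝ) := by exact_mod_cast hnN
    rw [hQeq n]
    have h1 : ∏ i ∈ Finset.Icc 1 n, (((i:ℝ)+1)/((i:ℝ)+2) * (1 - 3*ε))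
        ≤ ∏ i ∈ Finset.Icc 1 n, F i := by
      refine Finset.prod_le_prod (fun i hi => ?_)
        (fun i hi => (key i (Finset.mem_Icc.1 hi).1).2.2)
      have h2 : (0:ℝ) ≤ ((i:ℝ)+1)/((i:ℝ)+2) := by positivity
      nlinarith
    rw [Finset.prod_mul_distrib, Finset.prod_const, Nat.card_Icc, Nat.add_sub_cancel,
      prodA] at h1
    have hpow : (1:ℝ)/2 ≤ (1 - 3*ε)^n := by
      have hB := one_add_mul_le_pow (show (-2:ℝ) ≤ -(3*ε) by linarith) n
      have hne : (1:ℝ) + (n:ℝ)*(-(3*ε)) = 1 - (n:ℝ)*(3*ε) := by ring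
      have h3 : (n:ℝ)*(3*ε) ≤ 1/2 := by
        have h3a : (n:ℝ)*(3*ε) ≤ (N:ℝ)*(3*ε) := by nlinarith
        have h4 : (N:ℝ)*(3*ε) = 1/2 := by
          have hNne : (N:ℝ) ≠ 0 := ne_of_gt hNpos
          rw [hε_def]
          field_simp
          ring
        linarith
      have h5 : (1:ℝ) + -(3*ε) = 1 - 3*ε := by ring
      rw [h5, hne] at hB
      linarith
    have h6 : (0:ℝ) ≤ 2/((n:ℝ)+2) := by positivity
    calc 1/((n:ℝ)+2) = 2/((n:ℝ)+2) * (1/2) := by ring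
      _ ≤ 2/((n:ℝ)+2) * (1 - 3*ε)^n := by nlinarith
      _ ≤ ∏ i ∈ Finset.Icc 1 n, F i := h1
  calc C ≤ ∑ n ∈ Finset.range N, 1/((n:ℝ)+2) := hNC
    _ ≤ ∑ n ∈ Finset.range N, Q f δ (n+1) := Finset.sum_le_sum hlow
    _ ≤ ∑' n : ℕ, Q f δ (n+1) := hpartial
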